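/- Let d ≥ 2 and define υ(x) = min(1, |x'|^{-d}, |x_d - |x'|^2|^{-d}) and υ_*(x) = min(1, |x'|^{-d}, |x_d + |x'|^2|^{-d}). Then there exists C_d < ∞ such that T^*(υ)(x) ≤ C_d · υ_*(x)^{1/d} for all x ∈ ℝ^d, where T^*f(x) = ∫_{ℝ^{d-1}} f(x'+t, x_d + |t|^2) dt. -/

import Mathlib

open MeasureTheory

/-- Points of ℝ^d written as `(x', x_d) ∈ ℝ^{d-1} × ℝ`. -/
abbrev Pt (d : ℕ) := EuclideanSpace ℝ (Fin (d - 1)) × ℝ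

/-- The transpose convolution operator `T^*f(x) = ∫_{ℝ^{d-1}} f(x'+t, x_d + |t|²) dt`
acting on nonnegative measurable functions. -/
noncomputable def TstarLin (d : ℕ) (f : Pt d → ENNReal) (x : Pt d) : ENNReal :=
  ∫⁻ t : EuclideanSpace ℝ (Fin (d - 1)), f (x.1 + t, x.2 + ‖t‖ ^ 2)

/-- `υ(x) = min(1, |x'|^{-d}, |x_d - |x'|²|^{-d}) = (max(1, |x'|^d, |x_d - |x'|²|^d))⁻¹`. -/
noncomputable def ups (d : ℕ) (x : Pt d) : ENNReal :=
  ENNReal.ofReal ((max 1 (max (‖x.1‖ ^ d) (|x.2 - ‖x.1‖ ^ 2| ^ d)))⁻¹)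

/-- `υ_*(x) = min(1, |x'|^{-d}, |x_d + |x'|²|^{-d}) = (max(1, |x'|^d, |x_d + |x'|²|^d))⁻¹`. -/
noncomputable def upsStar (d : ℕ) (x : Pt d) : ENNReal :=
  ENNReal.ofReal ((max 1 (max (‖x.1‖ ^ d) (|x.2 + ‖x.1‖ ^ 2| ^ d)))⁻¹)

/-!
Substituting `u = x' + t`, the quadratic terms cancel in `x_d + |t|² - |x' + t|²`, so
`T^*υ(x) = ∫ min(1, |u|^{-d}, |s - ⟪2x', u⟫|^{-d}) du` with `s = x_d + |x'|²`. An isometry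
`ℝ × ℝ^{d-2} ≅ ℝ^{d-1}`, `(t, w) ↦ u`, turns `⟪2x', u⟫` into `a t` with `a = 2|x'|`, and
`|u| ≥ max(|t|, |w|)`. At fixed `t`, scaling the `w`-integral gives `ρ(t)^{-2}` times a constant,
where `ρ(t) = max(1, |t|, |s - a t|)`. Finally `ρ(t)` dominates both `max(R, |t|)` and
`max(R, |s - a t|)` for `R = max(1, a, |s|) / (2 max(1, a))`; their `(·)^{-2}`-integrals are
constant multiples of `R⁻¹` and `(a R)⁻¹`, and the better of the two gives
`∫ ρ^{-2} ≲ 1 / max(1, a, |s|) ≤ υ_*(x)^{1/d}`.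
-/

open Module ENNReal
open scoped InnerProductSpace

section Scaling

variable {F : Type*} [NormedAddCommGroup F] [NormedSpace ℝ F] [MeasurableSpace F] [BorelSpace F]
  [FiniteDimensional ℝ F] (μ : Measure F) [μ.IsAddHaarMeasure]

theorem lintegral_comp_smul {f : F → ℝ≥0∞} (hf : Measurable f) {R : ℝ} (hR : R ≠ 0) :
    ∫⁻ x, f (R • x) ∂μ = ENNReal.ofReal |(R ^ finrank ℝ F)⁻¹| * ∫⁻ x, f x ∂μ := by
  rw [← lintegral_map hf (measurable_const_smul R), Measure.map_addHaar_smul μ hR,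
    lintegral_smul_measure, smul_eq_mul]

/-- `max 1 ‖x‖` plays the role of the Japanese bracket `⟨x⟩`. -/
noncomputable def bracketIntegral (r : ℕ) : ℝ≥0∞ :=
  ∫⁻ x, ENNReal.ofReal ((max 1 ‖x‖ ^ r)⁻¹) ∂μ

theorem bracketIntegral_lt_top {r : ℕ} (hr : finrank ℝ F < r) : bracketIntegral μ r < ∞ := by
  have hbound : ∀ x : F, (max 1 ‖x‖ ^ r)⁻¹ ≤ 2 ^ r * (1 + ‖x‖) ^ (-(r : ℝ)) := fun x => by
    rw [Real.rpow_neg (by positivity), Real.rpow_natCast, ← div_eq_mul_inv,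
      le_div_iff₀ (by positivity), ← div_eq_inv_mul, div_le_iff₀ (by positivity), ← mul_pow]
    gcongr
    linarith [le_max_left 1 ‖x‖, le_max_right 1 ‖x‖]
  calc bracketIntegral μ r
      ≤ ∫⁻ x, ENNReal.ofReal (2 ^ r) * ENNReal.ofReal ((1 + ‖x‖) ^ (-(r : ℝ))) ∂μ :=
        lintegral_mono fun x => by
          rw [← ENNReal.ofReal_mul (by positivity)]
          exact ENNReal.ofReal_le_ofReal (hbound x)
    _ = ENNReal.ofReal (2 ^ r) * ∫⁻ x, ENNReal.ofReal ((1 + ‖x‖) ^ (-(r : ℝ))) ∂μ :=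
        lintegral_const_mul' _ _ ofReal_ne_top
    _ < ∞ := mul_lt_top ofReal_lt_top (finite_integral_one_add_norm (by exact_mod_cast hr))

theorem lintegral_inv_max_norm_pow (r : ℕ) {ρ : ℝ} (hρ : 0 < ρ) :
    ∫⁻ x, ENNReal.ofReal ((max ρ ‖x‖ ^ r)⁻¹) ∂μ
      = ENNReal.ofReal (ρ ^ finrank ℝ F / ρ ^ r) * bracketIntegral μ r := by
  have hrescale : ∀ x : F, ENNReal.ofReal ((max 1 ‖ρ⁻¹ • x‖ ^ r)⁻¹)
      = ENNReal.ofReal (ρ ^ r) * ENNReal.ofReal ((max ρ ‖x‖ ^ r)⁻¹) := fun x => by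
    rw [← ENNReal.ofReal_mul (by positivity), norm_smul, norm_inv, Real.norm_eq_abs,
      abs_of_pos hρ, ← inv_mul_cancel₀ hρ.ne', ← mul_max_of_nonneg _ _ (inv_nonneg.2 hρ.le),
      mul_pow, mul_inv, inv_pow, inv_inv]
  have h := lintegral_comp_smul μ (f := fun x => ENNReal.ofReal ((max 1 ‖x‖ ^ r)⁻¹))
    (by fun_prop) (inv_ne_zero hρ.ne')
  simp only [hrescale, lintegral_const_mul' _ _ ofReal_ne_top] at h
  rw [bracketIntegral, ← ENNReal.mul_right_inj (a := ENNReal.ofReal (ρ ^ r))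
    (ENNReal.ofReal_pos.2 (by positivity)).ne' ofReal_ne_top, h, ← mul_assoc,
    ← ENNReal.ofReal_mul (by positivity)]
  congr 2
  rw [inv_pow, inv_inv, abs_of_pos (by positivity)]
  field_simp

end Scaling

theorem lintegral_inv_max_abs_sq (R : ℝ) (hR : 0 < R) :
    ∫⁻ t : ℝ, ENNReal.ofReal ((max R |t| ^ 2)⁻¹)
      = ENNReal.ofReal R⁻¹ * bracketIntegral (volume : Measure ℝ) 2 := by
  have h := lintegral_inv_max_norm_pow (volume : Measure ℝ) 2 hR
  simp only [Real.norm_eq_abs, finrank_self, pow_one] at h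
  rw [h]
  congr 2
  field_simp

theorem lintegral_inv_max_abs_affine_sq (R s : ℝ) (hR : 0 < R) {a : ℝ} (ha : 0 < a) :
    ∫⁻ t : ℝ, ENNReal.ofReal ((max R |s - a * t| ^ 2)⁻¹)
      = ENNReal.ofReal (a * R)⁻¹ * bracketIntegral (volume : Measure ℝ) 2 := by
  have h := lintegral_comp_smul (volume : Measure ℝ)
    (f := fun t => ENNReal.ofReal ((max R |s - t| ^ 2)⁻¹)) (by fun_prop) ha.ne'
  simp only [smul_eq_mul, finrank_self, pow_one, abs_inv, abs_of_pos ha] at h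
  rw [h, lintegral_sub_left_eq_self (fun t => ENNReal.ofReal ((max R |t| ^ 2)⁻¹)) s,
    lintegral_inv_max_abs_sq R hR, ← mul_assoc, ← ENNReal.ofReal_mul (by positivity), mul_inv]

theorem lintegral_inv_max_sq_le (a s : ℝ) (ha : 0 ≤ a) :
    ∫⁻ t : ℝ, ENNReal.ofReal ((max 1 (max |t| |s - a * t|) ^ 2)⁻¹)
      ≤ ENNReal.ofReal (2 / max 1 (max a |s|)) * bracketIntegral (volume : Measure ℝ) 2 := by
  set M := max 1 (max a |s|)
  set A := max 1 a
  set R := M / (2 * A)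
  have hA : 1 ≤ A := le_max_left _ _
  have hR : 0 < R := div_pos (lt_of_lt_of_le one_pos (le_max_left _ _)) (by positivity)
  -- `|s| ≤ |s - a t| + a |t|` bounds `M` by `2 A` times the integrand's denominator
  have hR_le : ∀ t : ℝ, R ≤ max 1 (max |t| |s - a * t|) := fun t => by
    have hs : |s| ≤ |s - a * t| + a * |t| := by
      simpa [abs_mul, abs_of_nonneg ha] using abs_add_le (s - a * t) (a * t)
    rw [div_le_iff₀ (by positivity)]
    refine max_le (by nlinarith [le_max_left 1 (max |t| |s - a * t|)]) (max_le ?_ ?_)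
    · nlinarith [le_max_right 1 a, le_max_left 1 (max |t| |s - a * t|)]
    · nlinarith [le_max_left 1 (max |t| |s - a * t|), le_max_right 1 (max |t| |s - a * t|),
        le_max_left |t| |s - a * t|, le_max_right |t| |s - a * t|, le_max_right 1 a,
        abs_nonneg t]
  have hM : M = 2 * A * R := by simp only [R]; field_simp
  rcases le_total a 1 with ha1 | ha1
  · have hA1 : A = 1 := max_eq_left ha1
    calc _ ≤ ∫⁻ t : ℝ, ENNReal.ofReal ((max R |t| ^ 2)⁻¹) := lintegral_mono fun t => by
          gcongr ENNReal.ofReal ((?_ ^ 2)⁻¹)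
          exact max_le (hR_le t) ((le_max_left _ _).trans (le_max_right _ _))
      _ = _ := by rw [lintegral_inv_max_abs_sq R hR, hM, hA1]; field_simp
  · have hA1 : A = a := max_eq_right ha1
    calc _ ≤ ∫⁻ t : ℝ, ENNReal.ofReal ((max R |s - a * t| ^ 2)⁻¹) := lintegral_mono fun t => by
          gcongr ENNReal.ofReal ((?_ ^ 2)⁻¹)
          exact max_le (hR_le t) ((le_max_right _ _).trans (le_max_right _ _))
      _ = _ := by
        rw [lintegral_inv_max_abs_affine_sq R s hR (by linarith), hM, hA1]; field_simp

theorem lintegral_prod_inv_max_pow_le {F : Type*} [NormedAddCommGroup F] [NormedSpace ℝ F]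
    [MeasurableSpace F] [BorelSpace F] [FiniteDimensional ℝ F] (μ : Measure F)
    [μ.IsAddHaarMeasure] {n : ℕ} (hn : finrank ℝ F = n) (a s : ℝ) (ha : 0 ≤ a) :
    ∫⁻ p : ℝ × F, ENNReal.ofReal
        ((max 1 (max (max |p.1| ‖p.2‖) |s - a * p.1|) ^ (n + 2))⁻¹) ∂(volume.prod μ)
      ≤ ENNReal.ofReal (2 / max 1 (max a |s|)) * bracketIntegral (volume : Measure ℝ) 2 *
          bracketIntegral μ (n + 2) := by
  set ρ : ℝ → ℝ := fun t => max 1 (max |t| |s - a * t|)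
  have hρ : ∀ t, 0 < ρ t := fun t => lt_of_lt_of_le one_pos (le_max_left _ _)
  have hfiber : ∀ t, ∫⁻ w, ENNReal.ofReal
        ((max 1 (max (max |t| ‖w‖) |s - a * t|) ^ (n + 2))⁻¹) ∂μ
      = ENNReal.ofReal ((ρ t ^ 2)⁻¹) * bracketIntegral μ (n + 2) := fun t => by
    have hmax : ∀ w : F, max 1 (max (max |t| ‖w‖) |s - a * t|) = max (ρ t) ‖w‖ := fun w => by
      simp only [ρ, max_assoc, max_comm ‖w‖]
    simp only [hmax]
    rw [lintegral_inv_max_norm_pow μ _ (hρ t), hn]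
    congr 2
    rw [pow_add]
    field_simp [(hρ t).ne']
  calc _ ≤ ∫⁻ t, ∫⁻ w, ENNReal.ofReal
          ((max 1 (max (max |t| ‖w‖) |s - a * t|) ^ (n + 2))⁻¹) ∂μ := lintegral_prod_le _
    _ = (∫⁻ t, ENNReal.ofReal ((ρ t ^ 2)⁻¹)) * bracketIntegral μ (n + 2) := by
        simp only [hfiber]
        exact lintegral_mul_const' _ _ (bracketIntegral_lt_top μ (by omega)).ne
    _ ≤ _ := by gcongr; exact lintegral_inv_max_sq_le a s ha

theorem exists_linearIsometryEquiv_inner_eq_fst {E : Type*} [NormedAddCommGroup E]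
    [InnerProductSpace ℝ E] {n : ℕ} (hE : finrank ℝ E = n + 1) {e : E}
    (he : ‖e‖ = 1) :
    ∃ Φ : WithLp 2 (ℝ × EuclideanSpace ℝ (Fin n)) ≃ₗᵢ[ℝ] E,
      ∀ p, ⟪e, Φ p⟫_ℝ = (WithLp.ofLp p).1 := by
  have : Fact (finrank ℝ E = n + 1) := ⟨hE⟩
  have : FiniteDimensional ℝ E := .of_fact_finrank_eq_succ n
  set K := ℝ ∙ e
  have hK : finrank ℝ Kᗮ = n :=
    Submodule.finrank_orthogonal_span_singleton (norm_ne_zero_iff.1 (by simp [he]))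
  refine ⟨(LinearIsometryEquiv.withLpProdCongr 2 (LinearIsometryEquiv.toSpanUnitSingleton e he)
    ((stdOrthonormalBasis ℝ Kᗮ).reindex (finCongr hK)).repr.symm).trans
      K.orthogonalDecomposition.symm, fun p => ?_⟩
  have horth : ∀ w : Kᗮ, ⟪e, (w : E)⟫_ℝ = 0 := fun w =>
    Submodule.inner_right_of_mem_orthogonal (Submodule.mem_span_singleton_self e) w.2
  simp [inner_add_right, real_inner_smul_right, horth, he]

theorem exists_norm_eq_one_smul_eq {E : Type*} [NormedAddCommGroup E] [NormedSpace ℝ E]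
    [Nontrivial E] (y : E) : ∃ e : E, ‖e‖ = 1 ∧ y = ‖y‖ • e := by
  rcases eq_or_ne y 0 with rfl | hy
  · obtain ⟨e, he⟩ := exists_norm_eq E zero_le_one
    exact ⟨e, he, by simp⟩
  · exact ⟨‖y‖⁻¹ • y, norm_smul_inv_norm hy, by
      rw [smul_smul, mul_inv_cancel₀ (norm_ne_zero_iff.2 hy), one_smul]⟩

theorem lintegral_inv_max_inner_pow_le {E : Type*} [NormedAddCommGroup E]
    [InnerProductSpace ℝ E] [FiniteDimensional ℝ E] [MeasurableSpace E] [BorelSpace E] {n : ℕ}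
    (hE : finrank ℝ E = n + 1) (y : E) (s : ℝ) (r : ℕ) :
    ∫⁻ u : E, ENNReal.ofReal ((max 1 (max ‖u‖ |s - ⟪y, u⟫_ℝ|) ^ r)⁻¹)
      ≤ ∫⁻ p : ℝ × EuclideanSpace ℝ (Fin n),
          ENNReal.ofReal ((max 1 (max (max |p.1| ‖p.2‖) |s - ‖y‖ * p.1|) ^ r)⁻¹) := by
  have : Nontrivial E := nontrivial_of_finrank_eq_succ hE
  obtain ⟨e, he, hy⟩ := exists_norm_eq_one_smul_eq y
  obtain ⟨Φ, hΦ⟩ := exists_linearIsometryEquiv_inner_eq_fst hE he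
  set τ := (MeasurableEquiv.toLp 2 (ℝ × EuclideanSpace ℝ (Fin n))).trans Φ.toMeasurableEquiv
  have hτ : MeasurePreserving τ :=
    Φ.measurePreserving.comp (WithLp.volume_preserving_toLp ℝ (EuclideanSpace ℝ (Fin n)))
  rw [hτ.lintegral_map_equiv]
  refine lintegral_mono fun p => ?_
  have hinner : ⟪y, τ p⟫_ℝ = ‖y‖ * p.1 := by
    rw [hy, real_inner_smul_left, norm_smul, he, Real.norm_eq_abs, abs_norm, mul_one]
    exact congrArg _ (hΦ _)
  have hnorm : max |p.1| ‖p.2‖ ≤ ‖τ p‖ := by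
    simp only [τ, MeasurableEquiv.trans_apply, LinearIsometryEquiv.coe_toMeasurableEquiv,
      LinearIsometryEquiv.norm_map]
    exact max_le (WithLp.norm_fst_le (x := WithLp.toLp 2 p))
      (WithLp.norm_snd_le (x := WithLp.toLp 2 p))
  rw [hinner]
  gcongr ENNReal.ofReal ((max 1 (max ?_ _) ^ r)⁻¹)

theorem max_one_max_pow {a b : ℝ} (ha : 0 ≤ a) (hb : 0 ≤ b) (d : ℕ) :
    max 1 (max (a ^ d) (b ^ d)) = max 1 (max a b) ^ d := by
  have hpow : ∀ x y : ℝ, 0 ≤ x → 0 ≤ y → max x y ^ d = max (x ^ d) (y ^ d) := fun x y hx hy => by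
    rcases le_total x y with h | h
    · rw [max_eq_right h, max_eq_right (pow_le_pow_left₀ hx h d)]
    · rw [max_eq_left h, max_eq_left (pow_le_pow_left₀ hy h d)]
  rw [hpow _ _ zero_le_one (le_max_of_le_left ha), hpow a b ha hb, one_pow]

theorem ups_eq (d : ℕ) (x : Pt d) :
    ups d x = ENNReal.ofReal ((max 1 (max ‖x.1‖ |x.2 - ‖x.1‖ ^ 2|) ^ d)⁻¹) := by
  rw [ups, max_one_max_pow (norm_nonneg _) (abs_nonneg _)]

theorem upsStar_rpow_eq {d : ℕ} (hd : d ≠ 0) (x : Pt d) :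
    upsStar d x ^ ((1 : ℝ) / d) = ENNReal.ofReal (max 1 (max ‖x.1‖ |x.2 + ‖x.1‖ ^ 2|))⁻¹ := by
  rw [upsStar, max_one_max_pow (norm_nonneg _) (abs_nonneg _), ← inv_pow,
    ENNReal.ofReal_pow (inv_nonneg.2 (zero_le_one.trans (le_max_left _ _))),
    ← ENNReal.rpow_natCast, ← ENNReal.rpow_mul, mul_one_div_cancel (Nat.cast_ne_zero.2 hd),
    ENNReal.rpow_one]

theorem TstarLin_ups_eq (m : ℕ) (x' : EuclideanSpace ℝ (Fin (m + 1))) (xd : ℝ) :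
    TstarLin (m + 2) (ups (m + 2)) (x', xd) = ∫⁻ u : EuclideanSpace ℝ (Fin (m + 1)),
      ENNReal.ofReal ((max 1 (max ‖u‖ |xd + ‖x'‖ ^ 2 - ⟪(2 : ℝ) • x', u⟫_ℝ|) ^ (m + 2))⁻¹) := by
  change ∫⁻ t : EuclideanSpace ℝ (Fin (m + 1)), ups (m + 2) (x' + t, xd + ‖t‖ ^ 2) = _
  conv_rhs => rw [← lintegral_add_left_eq_self _ x']
  refine lintegral_congr fun t => ?_
  have hquad : xd + ‖t‖ ^ 2 - ‖x' + t‖ ^ 2 = xd + ‖x'‖ ^ 2 - ⟪(2 : ℝ) • x', x' + t⟫_ℝ := by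
    rw [norm_add_sq_real, real_inner_smul_left, inner_add_right, real_inner_self_eq_norm_sq]
    ring
  rw [ups_eq, hquad]

/-- For `d ≥ 2` there is a finite constant `C_d` with `T^*(υ) ≤ C_d · υ_*^{1/d}` pointwise. -/
theorem TstarLin_ups_le (d : ℕ) (hd : 2 ≤ d) :
    ∃ C : ENNReal, C < ⊤ ∧ ∀ x : Pt d,
      TstarLin d (ups d) x ≤ C * (upsStar d x) ^ ((1 : ℝ) / d) := by
  obtain ⟨m, rfl⟩ : ∃ m, d = m + 2 := ⟨d - 2, by omega⟩
  set B := bracketIntegral (volume : Measure ℝ) 2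
  set I := bracketIntegral (volume : Measure (EuclideanSpace ℝ (Fin m))) (m + 2)
  refine ⟨2 * B * I, mul_lt_top (mul_lt_top ofNat_lt_top (bracketIntegral_lt_top _ (by simp)))
    (bracketIntegral_lt_top _ (by simp)), fun x => ?_⟩
  set s := x.2 + ‖x.1‖ ^ 2
  calc TstarLin (m + 2) (ups (m + 2)) x
      = ∫⁻ u : EuclideanSpace ℝ (Fin (m + 1)),
          ENNReal.ofReal ((max 1 (max ‖u‖ |s - ⟪(2 : ℝ) • x.1, u⟫_ℝ|) ^ (m + 2))⁻¹) :=
        TstarLin_ups_eq m x.1 x.2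
    _ ≤ ∫⁻ p : ℝ × EuclideanSpace ℝ (Fin m), ENNReal.ofReal
          ((max 1 (max (max |p.1| ‖p.2‖) |s - ‖(2 : ℝ) • x.1‖ * p.1|) ^ (m + 2))⁻¹) :=
        lintegral_inv_max_inner_pow_le (by simp) _ s _
    _ ≤ ENNReal.ofReal (2 / max 1 (max ‖(2 : ℝ) • x.1‖ |s|)) * B * I :=
        lintegral_prod_inv_max_pow_le volume finrank_euclideanSpace_fin _ s (norm_nonneg _)
    _ = 2 * B * I * ENNReal.ofReal (max 1 (max ‖(2 : ℝ) • x.1‖ |s|))⁻¹ := by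
        rw [div_eq_mul_inv, ENNReal.ofReal_mul zero_le_two, ENNReal.ofReal_ofNat]
        ring
    _ ≤ 2 * B * I * ENNReal.ofReal (max 1 (max ‖x.1‖ |s|))⁻¹ := by
        have hx : ‖x.1‖ ≤ ‖(2 : ℝ) • x.1‖ := by
          rw [norm_smul]
          exact le_mul_of_one_le_left (norm_nonneg _) (by norm_num)
        gcongr
    _ = 2 * B * I * upsStar (m + 2) x ^ ((1 : ℝ) / (m + 2 : ℕ)) := by
        rw [upsStar_rpow_eq (by omega)]
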